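/- For any a ≥ 1 there is a constant C_a with 0 < C_a < (1/(2a))² such that Ψ(s) ≥ C_a (log^a(e+|s|) + 1)² − C_a' for all s, where Ψ(s) = ∫₀ˢ v_a(r) dr and v_a(r) = ∫₀ʳ log^{2(a−1)}(e+|t|)/(e+|t|)² dt. In particular Ψ grows at least like (log^a(e+|s|))². -/

import Mathlib

/-!
The integrand of `v_a` is positive and even, so `v_a` is odd and nondecreasing and `Ψ` is even;
hence `Ψ s ≥ v_a 1 * (|s| - 1)`. On the other side `log x ^ a ≤ (4a) ^ a * x ^ (1/4)`, so
`(log x ^ a + 1) ^ 2` is at most a multiple of `√x`, which AM-GM bounds by an arbitrarily small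
multiple of `x` plus a constant.
-/

open Real MeasureTheory intervalIntegral

noncomputable def va (a : ℝ) (r : ℝ) : ℝ :=
  ∫ t in (0:ℝ)..r, Real.log (Real.exp 1 + |t|) ^ (2 * (a - 1)) / (Real.exp 1 + |t|) ^ 2

noncomputable def Psi (a : ℝ) (s : ℝ) : ℝ := ∫ r in (0:ℝ)..s, va a r

section Primitive

variable {f : ℝ → ℝ}

theorem Function.Even.primitive_odd (hf : f.Even) : (fun x => ∫ t in (0:ℝ)..x, f t).Odd := by
  intro x
  calc ∫ t in (0:ℝ)..-x, f t = -∫ t in -x..0, f t := integral_symm _ _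
    _ = -∫ t in (0:ℝ)..x, f (-t) := by rw [integral_comp_neg, neg_zero]
    _ = -∫ t in (0:ℝ)..x, f t := by simp_rw [show ∀ t, f (-t) = f t from hf]

theorem Function.Odd.primitive_even (hf : f.Odd) : (fun x => ∫ t in (0:ℝ)..x, f t).Even := by
  intro x
  calc ∫ t in (0:ℝ)..-x, f t = -∫ t in -x..0, f t := integral_symm _ _
    _ = -∫ t in (0:ℝ)..x, f (-t) := by rw [integral_comp_neg, neg_zero]
    _ = ∫ t in (0:ℝ)..x, f t := by
      simp_rw [show ∀ t, f (-t) = -f t from hf, intervalIntegral.integral_neg, neg_neg]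

theorem monotone_primitive_of_nonneg (hfi : ∀ x y, IntervalIntegrable f volume x y)
    (hf : 0 ≤ f) : Monotone fun x => ∫ t in (0:ℝ)..x, f t := by
  intro x y hxy
  have h := integral_interval_sub_left (hfi 0 y) (hfi 0 x)
  have : 0 ≤ ∫ t in x..y, f t := integral_nonneg hxy fun t _ => hf t
  simp only
  linarith

theorem mul_sub_le_integral_of_monotone (hf : Monotone f) (hf0 : 0 ≤ f 0) {b s : ℝ}
    (hb : 0 ≤ b) (hs : 0 ≤ s) : f b * (s - b) ≤ ∫ r in (0:ℝ)..s, f r := by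
  rcases le_total s b with hsb | hbs
  · have h₁ : f b * (s - b) ≤ 0 :=
      mul_nonpos_of_nonneg_of_nonpos (hf0.trans (hf hb)) (by linarith)
    have h₂ : 0 ≤ ∫ r in (0:ℝ)..s, f r := integral_nonneg hs fun r hr => hf0.trans (hf hr.1)
    linarith
  · rw [← integral_add_adjacent_intervals hf.intervalIntegrable hf.intervalIntegrable]
    have h₁ : 0 ≤ ∫ r in (0:ℝ)..b, f r := integral_nonneg hb fun r hr => hf0.trans (hf hr.1)
    have h₂ : ∫ r in b..s, f b ≤ ∫ r in b..s, f r :=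
      integral_mono_on hbs intervalIntegrable_const hf.intervalIntegrable fun r hr => hf hr.1
    rw [intervalIntegral.integral_const, smul_eq_mul, mul_comm] at h₂
    linarith

end Primitive

theorem log_rpow_le_mul_rpow {x a ε : ℝ} (hx : 1 ≤ x) (ha : 0 < a) (hε : 0 < ε) :
    log x ^ a ≤ (a / ε) ^ a * x ^ ε := by
  have hlog : log x ≤ a / ε * x ^ (ε / a) := by
    have h := log_le_rpow_div (x := x) (by linarith) (div_pos hε ha)
    rw [div_div_eq_mul_div, mul_comm, mul_div_assoc] at h
    exact h.trans_eq (by ring)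
  calc log x ^ a ≤ (a / ε * x ^ (ε / a)) ^ a := rpow_le_rpow (log_nonneg hx) hlog ha.le
    _ = (a / ε) ^ a * x ^ ε := by
      rw [mul_rpow (by positivity) (by positivity), ← rpow_mul (by linarith),
        div_mul_cancel₀ _ ha.ne']

theorem exists_sq_log_rpow_add_one_le {a c : ℝ} (ha : 0 < a) (hc : 0 < c) :
    ∃ C ≥ 0, ∀ x ≥ 1, (log x ^ a + 1) ^ 2 ≤ c * x + C := by
  set M := (a / 4⁻¹) ^ a + 1
  refine ⟨M ^ 4 / (4 * c), by positivity, fun x hx => ?_⟩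
  set y := x ^ (4⁻¹ : ℝ)
  have hy : 1 ≤ y := one_le_rpow hx (by norm_num)
  have hxy : y ^ 4 = x := by
    simpa using rpow_inv_natCast_pow (n := 4) (by linarith) (by norm_num)
  have hlog : log x ^ a + 1 ≤ M * y := by
    have h : log x ^ a ≤ (a / 4⁻¹) ^ a * y := log_rpow_le_mul_rpow hx ha (by norm_num)
    rw [add_mul, one_mul]
    linarith
  calc (log x ^ a + 1) ^ 2 ≤ (M * y) ^ 2 :=
        pow_le_pow_left₀ (by linarith [rpow_nonneg (log_nonneg hx) a]) hlog 2
    _ ≤ c * y ^ 4 + M ^ 4 / (4 * c) := by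
      rw [← sub_nonneg]
      have : c * y ^ 4 + M ^ 4 / (4 * c) - (M * y) ^ 2
          = (2 * c * y ^ 2 - M ^ 2) ^ 2 / (4 * c) := by
        field_simp; ring
      rw [this]; positivity
    _ = c * x + M ^ 4 / (4 * c) := by rw [hxy]

noncomputable def weight (a t : ℝ) : ℝ :=
  log (exp 1 + |t|) ^ (2 * (a - 1)) / (exp 1 + |t|) ^ 2

theorem one_le_log_exp_one_add_abs (t : ℝ) : 1 ≤ log (exp 1 + |t|) := by
  rw [le_log_iff_exp_le (by positivity)]
  linarith [abs_nonneg t]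

theorem weight_pos (a t : ℝ) : 0 < weight a t := by
  have := one_le_log_exp_one_add_abs t
  unfold weight
  positivity

theorem weight_even (a : ℝ) : (weight a).Even := fun t => by
  simp only [weight, abs_neg]

theorem continuous_weight (a : ℝ) : Continuous (weight a) := by
  have hpos (t : ℝ) : 0 < exp 1 + |t| := by positivity
  have hbase : Continuous fun t : ℝ => exp 1 + |t| := continuous_const.add continuous_abs
  refine Continuous.div ?_ (hbase.pow 2) fun t => (pow_pos (hpos t) 2).ne'
  exact (hbase.log fun t => (hpos t).ne').rpow_const fun t =>
    Or.inl (zero_lt_one.trans_le (one_le_log_exp_one_add_abs t)).ne'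

theorem va_odd (a : ℝ) : (va a).Odd := (weight_even a).primitive_odd

theorem monotone_va (a : ℝ) : Monotone (va a) :=
  monotone_primitive_of_nonneg (continuous_weight a).intervalIntegrable
    fun t => (weight_pos a t).le

theorem va_one_pos (a : ℝ) : 0 < va a 1 :=
  intervalIntegral_pos_of_pos_on ((continuous_weight a).intervalIntegrable 0 1)
    (fun t _ => weight_pos a t) one_pos

theorem Psi_even (a : ℝ) : (Psi a).Even := (va_odd a).primitive_even

theorem Psi_abs (a s : ℝ) : Psi a |s| = Psi a s := by
  rcases abs_choice s with h | h <;> rw [h]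
  exact Psi_even a s

theorem va_one_mul_le_Psi (a : ℝ) {s : ℝ} (hs : 0 ≤ s) : va a 1 * (s - 1) ≤ Psi a s :=
  mul_sub_le_integral_of_monotone (monotone_va a) (by simp [va]) zero_le_one hs

theorem Psi_lower_bound (a : ℝ) (ha : 1 ≤ a) :
    ∃ Ca Ca' : ℝ, 0 < Ca ∧ Ca < (1 / (2 * a)) ^ 2 ∧ 0 ≤ Ca' ∧
      ∀ s : ℝ, Psi a s ≥
        Ca * (Real.log (Real.exp 1 + |s|) ^ a + 1) ^ 2 - Ca' := by
  have ha0 : 0 < a := zero_lt_one.trans_le ha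
  set Ca := (1 / (2 * a)) ^ 2 / 2
  have hCa : 0 < Ca := by positivity
  set v := va a 1
  have hv : 0 < v := va_one_pos a
  obtain ⟨C, hC0, hC⟩ := exists_sq_log_rpow_add_one_le ha0 (div_pos hv hCa)
  refine ⟨Ca, Ca * C + v * (exp 1 + 1), hCa, half_lt_self (by positivity), by positivity,
    fun s => ?_⟩
  have hx : 1 ≤ exp 1 + |s| := by linarith [add_one_le_exp 1, abs_nonneg s]
  have hlog := mul_le_mul_of_nonneg_left (hC _ hx) hCa.le
  rw [mul_add, ← mul_assoc, mul_div_cancel₀ v hCa.ne'] at hlog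
  have hPsi := va_one_mul_le_Psi a (abs_nonneg s)
  rw [Psi_abs] at hPsi
  linarith
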